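/- arXiv:1808.06745 — 2 statements merged into one kernel-verified Lean document; each statement's English description precedes it below -/
import Mathlib

section
/- (Proposition 2.1.) For every index k and for each • ∈ {*, ⧢}, we have Z•(k;T) = Σ_{j=0}^{b(k)} Z•(k^j;0) · T^j / j! in ℝ[T], where Z•(k^j;0) denotes the constant term (value at T = 0) of the polynomial Z•(k^j;T). -/
open scoped BigOperators

/-- The Riemann zeta value ζ(n) = Σ_{m ≥ 1} 1/mⁿ. -/
noncomputable def rzeta (n : ℕ) : ℝ := ∑' m : ℕ+, 1 / (m : ℝ) ^ n

/-- The multiple zeta value ζ(k₁,…,k_r) = Σ_{m₁ > ⋯ > m_r ≥ 1} 1/(m₁^{k₁} ⋯ m_r^{k_r}). -/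
noncomputable def mzv (k : List ℕ) : ℝ :=
  ∑' m : {m : Fin k.length → ℕ+ // StrictAnti m}, ∏ i, 1 / ((m.1 i : ℝ) ^ k.get i)

/-- An index is a finite sequence of positive integers. -/
def IsIndex (k : List ℕ) : Prop := ∀ a ∈ k, 1 ≤ a

/-- An index is admissible if it is empty or its first entry exceeds 1. -/
def IsAdmissible (k : List ℕ) : Prop := ∀ a ∈ k.head?, 2 ≤ a

/-- Auxiliary harmonic product, on *reversed* indices (peeling the last entries). -/
noncomputable def harmAux : List ℕ → List ℕ → (List ℕ →₀ ℚ)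
  | [], b => Finsupp.single b 1
  | a, [] => Finsupp.single a 1
  | ka :: as, lb :: bs =>
      Finsupp.mapDomain (lb :: ·) (harmAux (ka :: as) bs)
      + Finsupp.mapDomain (ka :: ·) (harmAux as (lb :: bs))
      + Finsupp.mapDomain ((ka + lb) :: ·) (harmAux as bs)

/-- The harmonic (stuffle) product of two indices, as an element of the
ℚ-vector space freely spanned by indices. -/
noncomputable def harm (k l : List ℕ) : List ℕ →₀ ℚ :=
  Finsupp.mapDomain List.reverse (harmAux k.reverse l.reverse)

/-- The word 0^{k₁-1}1 ⋯ 0^{k_r-1}1 associated to an index. -/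
def indexToWord (k : List ℕ) : List Bool :=
  k.flatMap fun a => List.replicate (a - 1) false ++ [true]

/-- Parse a word in letters 0, 1 back into an index. -/
def wordToIndex : List Bool → List ℕ
  | [] => []
  | true :: w => 1 :: wordToIndex w
  | false :: w =>
      match wordToIndex w with
      | [] => []
      | a :: rest => (a + 1) :: rest

/-- The shuffle product of two words. -/
noncomputable def wordShuffle : List Bool → List Bool → (List Bool →₀ ℚ)
  | [], b => Finsupp.single b 1
  | a, [] => Finsupp.single a 1
  | x :: xs, y :: ys =>
      Finsupp.mapDomain (x :: ·) (wordShuffle xs (y :: ys))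
      + Finsupp.mapDomain (y :: ·) (wordShuffle (x :: xs) ys)

/-- The shuffle product of two indices, as an element of the
ℚ-vector space freely spanned by indices. -/
noncomputable def shuf (k l : List ℕ) : List ℕ →₀ ℚ :=
  Finsupp.mapDomain wordToIndex (wordShuffle (indexToWord k) (indexToWord l))

/-- ℚ-linear extension of a map defined on indices. -/
noncomputable def Zext (Z : List ℕ → Polynomial ℝ) (v : List ℕ →₀ ℚ) : Polynomial ℝ :=
  v.sum fun m c => c • Z m

/-- Exponential of a formal power series (with zero constant term) over a field. -/
noncomputable def pexp {R : Type*} [Field R] (f : PowerSeries R) : PowerSeries R :=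
  PowerSeries.mk fun n =>
    ∑ m ∈ Finset.range (n + 1), PowerSeries.coeff (R := R) n (f ^ m) / (m.factorial : R)

/-- A(u) = exp(Σ_{n≥2} ((-1)ⁿ/n) ζ(n) uⁿ) ∈ ℝ[[u]]. -/
noncomputable def Aseries : PowerSeries ℝ :=
  pexp (PowerSeries.mk fun n => if 2 ≤ n then (-1 : ℝ) ^ n / n * rzeta n else 0)

/-- The linear map ρ determined by ρ(Tᵐ/m!) = (coefficient of uᵐ in A(u)e^{Tu}),
i.e. ρ(Tᵐ) = m! Σ_{j≤m} A_{m-j} Tʲ/j!. -/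
noncomputable def rho {R : Type*} [Field R] (A : PowerSeries R) (P : Polynomial R) :
    Polynomial R :=
  P.sum fun m a =>
    a • (m.factorial : R) •
      ∑ j ∈ Finset.range (m + 1),
        (PowerSeries.coeff (R := R) (m - j) A / (j.factorial : R)) • (Polynomial.X : Polynomial R) ^ j

/-- b(k): the number of leading 1's of an index k = ({1}^b, l) with l admissible. -/
def bIndex (k : List ℕ) : ℕ := (k.takeWhile (· = 1)).length

/-!
Let `∂` delete a leading entry `1` of an index and kill the indices with `b = 0`. For both
products, `m ↦ (1) • m` satisfies the Leibniz rule `∂((1) • m) = m + (1) • ∂m`, and the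
coefficient of `(1, m)` in `(1) • m` is `b(m) + 1`, every other term being smaller in
`length + b`. Differentiating `T · Z(m) = Z((1) • m)` then gives `Z'(k) = Z(∂k)` by induction
on `length + b`, because `Z` is constant on admissible indices. So the `j`-th derivative of
`Z(k)` is `Z(kʲ)` for `j ≤ b(k)` and the next one vanishes: the formula is Taylor's expansion
at `T = 0`.
-/

open Polynomial Finset Finsupp
open scoped Nat

namespace IsIndex

theorem nil : IsIndex [] := fun _ h => absurd h List.not_mem_nil

theorem cons {x : ℕ} {w : List ℕ} (hx : 1 ≤ x) (hw : IsIndex w) : IsIndex (x :: w) := by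
  intro a ha
  rcases List.mem_cons.1 ha with rfl | h
  · exact hx
  · exact hw a h

theorem of_cons {x : ℕ} {w : List ℕ} (h : IsIndex (x :: w)) : IsIndex w :=
  fun a ha => h a (List.mem_cons_of_mem _ ha)

theorem head {x : ℕ} {w : List ℕ} (h : IsIndex (x :: w)) : 1 ≤ x :=
  h x List.mem_cons_self

theorem drop {k : List ℕ} (h : IsIndex k) (j : ℕ) : IsIndex (k.drop j) :=
  fun a ha => h a (List.mem_of_mem_drop ha)

end IsIndex

theorem bIndex_cons_one (w : List ℕ) : bIndex (1 :: w) = bIndex w + 1 := by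
  simp [bIndex]

theorem bIndex_cons_of_ne_one {x : ℕ} (w : List ℕ) (hx : x ≠ 1) : bIndex (x :: w) = 0 := by
  simp [bIndex, hx]

theorem eq_one_cons_of_bIndex_ne_zero {k : List ℕ} (h : bIndex k ≠ 0) : ∃ m, k = 1 :: m := by
  match k, h with
  | x :: w, h =>
    by_cases hx : x = 1
    · exact ⟨w, by rw [hx]⟩
    · exact absurd (bIndex_cons_of_ne_one w hx) h

theorem bIndex_drop_bIndex (k : List ℕ) : bIndex (k.drop (bIndex k)) = 0 := by
  induction k with
  | nil => rfl
  | cons x w ih =>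
    by_cases hx : x = 1
    · rwa [hx, bIndex_cons_one, List.drop_succ_cons]
    · rw [bIndex_cons_of_ne_one w hx, List.drop_zero, bIndex_cons_of_ne_one w hx]

theorem isAdmissible_of_bIndex_eq_zero {k : List ℕ} (hk : IsIndex k) (h : bIndex k = 0) :
    IsAdmissible k := by
  match k, hk, h with
  | [], _, _ => intro a ha; simp at ha
  | x :: w, hk, h =>
    intro a ha
    obtain rfl : x = a := by simpa using ha
    have : x ≠ 1 := fun hx => by simp [hx, bIndex_cons_one] at h
    have := hk.head
    omega

section Zext

variable (Z W : List ℕ → ℝ[X])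

theorem Zext_single (t : List ℕ) (c : ℚ) : Zext Z (single t c) = c • Z t :=
  sum_single_index (zero_smul _ _)

theorem Zext_add (u v : List ℕ →₀ ℚ) : Zext Z (u + v) = Zext Z u + Zext Z v :=
  sum_add_index' (fun _ => zero_smul _ _) (fun _ _ _ => add_smul _ _ _)

theorem Zext_mapDomain (f : List ℕ → List ℕ) (v : List ℕ →₀ ℚ) :
    Zext Z (mapDomain f v) = Zext (Z ∘ f) v :=
  sum_mapDomain_index (fun _ => zero_smul _ _) (fun _ _ _ => add_smul _ _ _)

theorem Zext_eq_zero {v : List ℕ →₀ ℚ} (h : ∀ t ∈ v.support, Z t = 0) : Zext Z v = 0 :=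
  Finset.sum_eq_zero fun t ht => by simp [h t ht]

theorem derivative_Zext (v : List ℕ →₀ ℚ) :
    derivative (Zext Z v) = Zext (fun t => derivative (Z t)) v := by
  simp only [Zext, Finsupp.sum, map_sum, map_rat_smul]

theorem Zext_eq_add_of_eqOn_support {v : List ℕ →₀ ℚ} (a : List ℕ)
    (h : ∀ t ∈ v.support, t ≠ a → Z t = W t) :
    Zext Z v = Zext W v + v a • (Z a - W a) := by
  rw [← sub_eq_iff_eq_add', Zext, Zext, ← Finsupp.sum_sub]
  simp_rw [← smul_sub]
  refine Finsupp.sum_eq_single a (fun t ht hne => ?_) (fun _ => zero_smul _ _)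
  rw [h t (Finsupp.mem_support_iff.2 ht) hne, sub_self, smul_zero]

end Zext

/-- `peelOne Z` is `Z ∘ ∂`. -/
noncomputable def peelOne (Z : List ℕ → ℝ[X]) : List ℕ → ℝ[X]
  | [] => 0
  | x :: t => if x = 1 then Z t else 0

theorem peelOne_one_cons (Z : List ℕ → ℝ[X]) (t : List ℕ) : peelOne Z (1 :: t) = Z t := by
  simp [peelOne]

theorem peelOne_eq_zero (Z : List ℕ → ℝ[X]) {t : List ℕ} (h : bIndex t = 0) :
    peelOne Z t = 0 := by
  match t, h with
  | [], _ => rfl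
  | x :: w, h =>
    have : x ≠ 1 := fun hx => by simp [hx, bIndex_cons_one] at h
    simp [peelOne, this]

/-- The shape shared by `m ↦ (1) * m` and `m ↦ (1) ⧢ m`: in `(1) • (x, w)` the new `1`
either lands behind `x` (the first summand), in front of `x`, or is merged into a term `E`
whose first entry is at least `2`. -/
structure IsOneMul (P : List ℕ → List ℕ →₀ ℚ) : Prop where
  nil : P [] = single [1] 1
  cons : ∀ x w, 1 ≤ x → IsIndex w → ∃ E : List ℕ →₀ ℚ,
    P (x :: w) = mapDomain (x :: ·) (P w) + single (1 :: x :: w) 1 + E ∧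
      ∀ t ∈ E.support, IsIndex t ∧ t.length ≤ w.length + 2 ∧ bIndex t = 0

namespace IsOneMul

variable {P : List ℕ → List ℕ →₀ ℚ} (hP : IsOneMul P)
include hP

theorem mem_support {m : List ℕ} (hm : IsIndex m) {t : List ℕ} (ht : t ∈ (P m).support) :
    IsIndex t ∧ t.length ≤ m.length + 1 ∧ (t = 1 :: m ∨ bIndex t ≤ bIndex m) := by
  induction m generalizing t with
  | nil =>
    rw [hP.nil, Finsupp.support_single _ one_ne_zero, Finset.mem_singleton] at ht
    subst ht
    exact ⟨IsIndex.nil.cons le_rfl, le_rfl, Or.inl rfl⟩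
  | cons x w ih =>
    obtain ⟨E, hE, hEsupp⟩ := hP.cons x w hm.head hm.of_cons
    rw [hE] at ht
    rcases Finset.mem_union.1 (support_add ht) with ht | ht
    · rcases Finset.mem_union.1 (support_add ht) with ht | ht
      · obtain ⟨s, hs, rfl⟩ := Finset.mem_image.1 (mapDomain_support ht)
        obtain ⟨hsi, hsl, hsb⟩ := ih hm.of_cons hs
        refine ⟨hsi.cons hm.head, by simpa using hsl, ?_⟩
        by_cases hx : x = 1
        · subst hx
          rcases hsb with rfl | hsb
          · exact Or.inl rfl
          · right; rw [bIndex_cons_one, bIndex_cons_one]; omega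
        · exact Or.inr (by rw [bIndex_cons_of_ne_one s hx]; omega)
      · rw [Finsupp.support_single _ one_ne_zero, Finset.mem_singleton] at ht
        subst ht
        exact ⟨hm.cons le_rfl, le_rfl, Or.inl rfl⟩
    · obtain ⟨hti, htl, htb⟩ := hEsupp t ht
      exact ⟨hti, by simpa using htl, Or.inr (by omega)⟩

theorem apply_one_cons {m : List ℕ} (hm : IsIndex m) : P m (1 :: m) = bIndex m + 1 := by
  induction m with
  | nil => simp [hP.nil, bIndex]
  | cons x w ih =>
    obtain ⟨E, hE, hEsupp⟩ := hP.cons x w hm.head hm.of_cons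
    have hE0 : E (1 :: x :: w) = 0 :=
      Finsupp.notMem_support_iff.1 fun h => by simpa [bIndex_cons_one] using (hEsupp _ h).2.2
    rw [hE, Finsupp.add_apply, Finsupp.add_apply, single_eq_same, hE0, add_zero]
    by_cases hx : x = 1
    · subst hx
      rw [mapDomain_apply List.cons_injective, ih hm.of_cons, bIndex_cons_one]
      push_cast
      ring
    · rw [mapDomain_of_notMem_range _ _ (by simpa using hx), bIndex_cons_of_ne_one w hx]
      simp

variable {Z : List ℕ → ℝ[X]}

theorem Zext_peelOne (hmul : ∀ m, IsIndex m → Zext Z (P m) = X * Z m) {m : List ℕ}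
    (hm : IsIndex m) : Zext (peelOne Z) (P m) = Z m + X * peelOne Z m := by
  cases m with
  | nil => simp [hP.nil, Zext_single, peelOne]
  | cons x w =>
    obtain ⟨E, hE, hEsupp⟩ := hP.cons x w hm.head hm.of_cons
    have hEzero : Zext (peelOne Z) E = 0 :=
      Zext_eq_zero _ fun t ht => peelOne_eq_zero Z (hEsupp t ht).2.2
    rw [hE, Zext_add, Zext_add, hEzero, Zext_single, peelOne_one_cons, one_smul, add_zero,
      Zext_mapDomain]
    by_cases hx : x = 1
    · subst hx
      have : peelOne Z ∘ (1 :: ·) = Z := funext (peelOne_one_cons Z)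
      rw [this, hmul w hm.of_cons, peelOne_one_cons, add_comm]
    · have : peelOne Z ∘ (x :: ·) = 0 := funext fun _ => by simp [peelOne, hx]
      rw [this, Zext_eq_zero 0 fun _ _ => rfl, peelOne_eq_zero Z (bIndex_cons_of_ne_one w hx)]
      simp

end IsOneMul

section Derivative

variable {P : List ℕ → List ℕ →₀ ℚ} {Z : List ℕ → ℝ[X]}

theorem derivative_eq_peelOne (hP : IsOneMul P)
    (hmul : ∀ m, IsIndex m → Zext Z (P m) = X * Z m)
    (hconst : ∀ k, IsIndex k → bIndex k = 0 → derivative (Z k) = 0)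
    (t : List ℕ) (ht : IsIndex t) : derivative (Z t) = peelOne Z t := by
  by_cases h0 : bIndex t = 0
  · rw [hconst t ht h0, peelOne_eq_zero Z h0]
  obtain ⟨m, rfl⟩ := eq_one_cons_of_bIndex_ne_zero h0
  have hm : IsIndex m := ht.of_cons
  have hdm : derivative (Z m) = peelOne Z m := derivative_eq_peelOne hP hmul hconst m hm
  have hsupp : ∀ s ∈ (P m).support, s ≠ 1 :: m → derivative (Z s) = peelOne Z s := by
    intro s hs hne
    obtain ⟨hsi, hsl, hsb⟩ := hP.mem_support hm hs
    have hsb := hsb.resolve_left hne -- for `decreasing_by`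
    exact derivative_eq_peelOne hP hmul hconst s hsi
  have key := congrArg derivative (hmul m hm)
  rw [derivative_Zext, Zext_eq_add_of_eqOn_support _ _ (1 :: m) hsupp, hP.Zext_peelOne hmul hm,
    derivative_mul, derivative_X, one_mul, hdm, hP.apply_one_cons hm, peelOne_one_cons,
    add_comm (Z m), add_eq_left] at key
  -- `key : (b(m) + 1) • (Z'(1, m) - Z(m)) = 0`
  exact sub_eq_zero.1 ((smul_eq_zero.1 key).resolve_left (by positivity))
termination_by t.length + bIndex t
decreasing_by
  all_goals subst_vars; simp only [List.length_cons, bIndex_cons_one]; omega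

end Derivative

theorem Polynomial.eq_sum_of_iterate_derivative_eq_zero {R : Type*} [Field R] [CharZero R]
    {p : R[X]} {n : ℕ} (h : derivative^[n + 1] p = 0) :
    p = ∑ j ∈ range (n + 1), ((derivative^[j] p).eval 0 / j !) • X ^ j := by
  ext i
  simp only [finsetSum_coeff, coeff_smul, coeff_X_pow, smul_eq_mul, mul_ite, mul_one, mul_zero,
    Finset.sum_ite_eq, Finset.mem_range]
  split_ifs with hi
  · rw [← coeff_zero_eq_eval_zero, coeff_iterate_derivative, zero_add, Nat.descFactorial_self,
      nsmul_eq_mul, mul_div_cancel_left₀ _ (Nat.cast_ne_zero.2 i.factorial_ne_zero)]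
  · have hcoeff := congrArg (coeff · (i - (n + 1))) h
    simp only [coeff_iterate_derivative, Nat.sub_add_cancel (not_lt.1 hi), coeff_zero,
      nsmul_eq_mul] at hcoeff
    exact (mul_eq_zero.1 hcoeff).resolve_left
      (Nat.cast_ne_zero.2 (Nat.descFactorial_eq_zero_iff_lt.not.2 hi))

section Taylor

variable {Z : List ℕ → ℝ[X]} (hder : ∀ t, IsIndex t → derivative (Z t) = peelOne Z t)
include hder

theorem iterate_derivative_eq_drop {k : List ℕ} (hk : IsIndex k) {j : ℕ} (hj : j ≤ bIndex k) :
    derivative^[j] (Z k) = Z (k.drop j) := by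
  induction j generalizing k with
  | zero => rfl
  | succ j ih =>
    obtain ⟨m, rfl⟩ := eq_one_cons_of_bIndex_ne_zero (by omega : bIndex k ≠ 0)
    rw [bIndex_cons_one] at hj
    rw [Function.iterate_succ_apply, hder _ hk, peelOne_one_cons, ih hk.of_cons (by omega),
      List.drop_succ_cons]

theorem eq_sum_of_derivative_eq_peelOne {k : List ℕ} (hk : IsIndex k) :
    Z k = ∑ j ∈ range (bIndex k + 1), ((Z (k.drop j)).eval 0 / j !) • X ^ j := by
  have hvanish : derivative^[bIndex k + 1] (Z k) = 0 := by
    rw [Function.iterate_succ_apply', iterate_derivative_eq_drop hder hk le_rfl,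
      hder _ (hk.drop _), peelOne_eq_zero Z (bIndex_drop_bIndex k)]
  conv_lhs => rw [eq_sum_of_iterate_derivative_eq_zero hvanish]
  refine Finset.sum_congr rfl fun j hj => ?_
  rw [iterate_derivative_eq_drop hder hk (Nat.lt_succ_iff.1 (Finset.mem_range.1 hj))]

end Taylor

section Harmonic

theorem harmAux_nil_left (b : List ℕ) : harmAux [] b = single b 1 := by
  rw [harmAux]

theorem harmAux_nil_right (a : List ℕ) : harmAux a [] = single a 1 := by
  cases a <;> rw [harmAux.eq_def]

theorem harmAux_one_cons (c : ℕ) (cs : List ℕ) :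
    harmAux [1] (c :: cs) =
      mapDomain (c :: ·) (harmAux [1] cs) + single (1 :: c :: cs) 1 + single ((1 + c) :: cs) 1 := by
  simp [harmAux, harmAux_nil_left, mapDomain_single]

theorem harmAux_one_append (bs : List ℕ) (x : ℕ) :
    harmAux [1] (bs ++ [x]) = mapDomain (· ++ [x]) (harmAux [1] bs)
      + single (bs ++ [x, 1]) 1 + single (bs ++ [x + 1]) 1 := by
  induction bs with
  | nil =>
    simp only [List.nil_append, harmAux_one_cons, harmAux_nil_right, mapDomain_single,
      List.singleton_append, Nat.add_comm 1 x]
    abel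
  | cons c cs ih =>
    have hcomm : (c :: ·) ∘ (· ++ [x]) = (· ++ [x]) ∘ (c :: ·) := rfl
    simp only [List.cons_append, harmAux_one_cons, ih, mapDomain_add, mapDomain_single,
      ← mapDomain_comp, hcomm]
    rw [Nat.add_comm 1 c]
    abel

theorem harm_one_cons (x : ℕ) (w : List ℕ) :
    harm [1] (x :: w) = mapDomain (x :: ·) (harm [1] w)
      + single (1 :: x :: w) 1 + single ((x + 1) :: w) 1 := by
  have hrev : List.reverse ∘ (· ++ [x]) = (x :: ·) ∘ List.reverse := funext fun t => by simp
  rw [harm, harm, List.reverse_singleton, List.reverse_cons, harmAux_one_append, mapDomain_add,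
    mapDomain_add, mapDomain_single, mapDomain_single, ← mapDomain_comp, hrev, mapDomain_comp]
  simp

theorem isOneMul_harm : IsOneMul (harm [1]) where
  nil := by simp [harm, harmAux_nil_right, mapDomain_single]
  cons x w hx hw := by
    refine ⟨single ((x + 1) :: w) 1, harm_one_cons x w, fun t ht => ?_⟩
    rw [Finsupp.support_single _ one_ne_zero, Finset.mem_singleton] at ht
    subst ht
    exact ⟨hw.cons (by omega), by simp, bIndex_cons_of_ne_one w (by omega)⟩

end Harmonic

section Shuffle

def incHead : List ℕ → List ℕ
  | [] => []
  | a :: t => (a + 1) :: t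

theorem wordToIndex_true (z : List Bool) : wordToIndex (true :: z) = 1 :: wordToIndex z := by
  rw [wordToIndex]

theorem wordToIndex_false (z : List Bool) :
    wordToIndex (false :: z) = incHead (wordToIndex z) := by
  rw [wordToIndex]
  cases wordToIndex z <;> rfl

theorem wordToIndex_replicate_false (s : ℕ) (v : List Bool) :
    wordToIndex (List.replicate s false ++ true :: v) = (s + 1) :: wordToIndex v := by
  induction s with
  | zero => simp [wordToIndex_true]
  | succ n ih => simp [List.replicate_succ, wordToIndex_false, ih, incHead]

theorem indexToWord_cons (a : ℕ) (k : List ℕ) :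
    indexToWord (a :: k) = List.replicate (a - 1) false ++ true :: indexToWord k := by
  simp [indexToWord]

theorem wordToIndex_indexToWord {k : List ℕ} (hk : IsIndex k) :
    wordToIndex (indexToWord k) = k := by
  induction k with
  | nil => rfl
  | cons a w ih =>
    rw [indexToWord_cons, wordToIndex_replicate_false, ih hk.of_cons,
      Nat.sub_add_cancel hk.head]

theorem wordShuffle_one_cons (y : Bool) (ys : List Bool) :
    wordShuffle [true] (y :: ys) =
      single (true :: y :: ys) 1 + mapDomain (y :: ·) (wordShuffle [true] ys) := by
  simp [wordShuffle, mapDomain_single]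

theorem shuf_one_eq (m : List ℕ) :
    shuf [1] m = mapDomain wordToIndex (wordShuffle [true] (indexToWord m)) :=
  rfl

/-- Inserting the letter `1` into the leading zeros of `0^{x-1} 1 w` produces the terms of
`(1) ⧢ (x, w)` whose first entry is at least `2`. -/
theorem shuf_one_cons {x : ℕ} (w : List ℕ) (hx : 1 ≤ x) (hw : IsIndex w) :
    ∃ E : List ℕ →₀ ℚ,
      shuf [1] (x :: w) = mapDomain (x :: ·) (shuf [1] w) + single (1 :: x :: w) 1 + E ∧
        ∀ t ∈ E.support, IsIndex t ∧ t.length ≤ w.length + 2 ∧ bIndex t = 0 := by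
  induction x with
  | zero => omega
  | succ n ih =>
    rcases Nat.eq_zero_or_pos n with rfl | hn
    · refine ⟨0, ?_, by simp⟩
      have hcomp : wordToIndex ∘ (true :: ·) = (1 :: ·) ∘ wordToIndex :=
        funext wordToIndex_true
      rw [shuf_one_eq, indexToWord_cons, Nat.sub_self, List.replicate_zero, List.nil_append,
        wordShuffle_one_cons, mapDomain_add, mapDomain_single, ← mapDomain_comp, hcomp,
        mapDomain_comp, wordToIndex_true, wordToIndex_true, wordToIndex_indexToWord hw,
        ← shuf_one_eq]
      abel
    · obtain ⟨E', hE', hE'supp⟩ := ih hn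
      have hnw : IsIndex (n :: w) := hw.cons hn
      have hword : indexToWord ((n + 1) :: w) = false :: indexToWord (n :: w) := by
        rw [indexToWord_cons, indexToWord_cons, show n + 1 - 1 = n - 1 + 1 by omega,
          List.replicate_succ, List.cons_append]
      have hcomp : wordToIndex ∘ (false :: ·) = incHead ∘ wordToIndex :=
        funext wordToIndex_false
      have hinc : incHead ∘ (n :: ·) = ((n + 1) :: ·) := rfl
      refine ⟨single (2 :: n :: w) 1 + mapDomain incHead E', ?_, fun t ht => ?_⟩
      · rw [shuf_one_eq, hword, wordShuffle_one_cons, mapDomain_add, mapDomain_single,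
          ← mapDomain_comp, hcomp, mapDomain_comp, ← shuf_one_eq, hE', wordToIndex_true,
          wordToIndex_false, wordToIndex_indexToWord hnw, mapDomain_add, mapDomain_add,
          mapDomain_single, ← mapDomain_comp, hinc]
        simp only [incHead]
        abel
      rcases Finset.mem_union.1 (support_add ht) with ht | ht
      · rw [Finsupp.support_single _ one_ne_zero, Finset.mem_singleton] at ht
        subst ht
        exact ⟨hnw.cons (by omega), by simp, bIndex_cons_of_ne_one _ (by omega)⟩
      · obtain ⟨s, hs, rfl⟩ := Finset.mem_image.1 (mapDomain_support ht)
        obtain ⟨hsi, hsl, -⟩ := hE'supp s hs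
        match s, hsi, hsl with
        | [], _, _ => exact ⟨IsIndex.nil, Nat.zero_le _, rfl⟩
        | a :: s, hsi, hsl =>
          exact ⟨hsi.of_cons.cons (by omega), by simpa [incHead] using hsl,
            bIndex_cons_of_ne_one _ (by have := hsi.head; omega)⟩

theorem isOneMul_shuf : IsOneMul (shuf [1]) where
  nil := by
    rw [shuf_one_eq, indexToWord, List.flatMap_nil, wordShuffle.eq_def]
    exact mapDomain_single
  cons _ w hx hw := shuf_one_cons w hx hw

end Shuffle

/-- **Proposition 2.1.** For every index k and each • ∈ {*, ⧢},
Z•(k;T) = Σ_{j=0}^{b(k)} Z•(kʲ;0) Tʲ/j!, where kʲ = ({1}^{b(k)-j}, l) = k with the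
first j entries removed. -/
theorem reg_poly_coeff
    (Zs Zh : List ℕ → Polynomial ℝ)
    (hZs_adm : ∀ k, IsIndex k → IsAdmissible k → Zs k = Polynomial.C (mzv k))
    (hZh_adm : ∀ k, IsIndex k → IsAdmissible k → Zh k = Polynomial.C (mzv k))
    (hZs_one : Zs [1] = Polynomial.X)
    (hZh_one : Zh [1] = Polynomial.X)
    (hZs_mul : ∀ k l, IsIndex k → IsIndex l → Zext Zs (harm k l) = Zs k * Zs l)
    (hZh_mul : ∀ k l, IsIndex k → IsIndex l → Zext Zh (shuf k l) = Zh k * Zh l)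
    (k : List ℕ) (hk : IsIndex k) :
    (Zs k = ∑ j ∈ Finset.range (bIndex k + 1),
        ((Zs (k.drop j)).eval 0 / (j.factorial : ℝ)) • (Polynomial.X : Polynomial ℝ) ^ j)
    ∧ (Zh k = ∑ j ∈ Finset.range (bIndex k + 1),
        ((Zh (k.drop j)).eval 0 / (j.factorial : ℝ)) • (Polynomial.X : Polynomial ℝ) ^ j) := by
  have hone : IsIndex [1] := IsIndex.nil.cons le_rfl
  have hconst {Z : List ℕ → ℝ[X]} (hadm : ∀ k, IsIndex k → IsAdmissible k → Z k = C (mzv k))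
      (k : List ℕ) (hk : IsIndex k) (h0 : bIndex k = 0) : derivative (Z k) = 0 := by
    rw [hadm k hk (isAdmissible_of_bIndex_eq_zero hk h0), derivative_C]
  constructor
  · refine eq_sum_of_derivative_eq_peelOne
      (derivative_eq_peelOne isOneMul_harm (fun m hm => ?_) (hconst hZs_adm)) hk
    rw [hZs_mul [1] m hone hm, hZs_one]
  · refine eq_sum_of_derivative_eq_peelOne
      (derivative_eq_peelOne isOneMul_shuf (fun m hm => ?_) (hconst hZh_adm)) hk
    rw [hZh_mul [1] m hone hm, hZh_one]
end

section
/- (Proposition 2.5, first identity, coefficientwise form.) For every index k = (k1, ..., kr), we have ζ*_{x,y}(k;T) = Σ x^{k1+...+ki} · y^{k_{j+1}+...+kr} · ((x+y)T)^{j-i}/(j-i)! · Z*(k_i,...,k_1;0) · Z*(k_{j+1},...,k_r;0) in ℝ[x,y,T], where the sum is over all pairs of integers 0 ≤ i ≤ j ≤ r such that k_{i+1} = k_{i+2} = ... = k_j = 1, and Z*(m;0) denotes the value at T = 0 of the polynomial Z*(m;T). -/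
open scoped BigOperators

/-- ζ*_{x,y}(k;T) = Σ_{i=0}^{r} x^{k₁+⋯+kᵢ} y^{k_{i+1}+⋯+k_r}
Z*(kᵢ,…,k₁;T)·Z*(k_{i+1},…,k_r;T) as an element of ℝ[x,y,T],
where x, y, T are the variables X 0, X 1, X 2. -/
noncomputable def zetaXYpoly (Z : List ℕ → Polynomial ℝ) (k : List ℕ) :
    MvPolynomial (Fin 3) ℝ :=
  ∑ i ∈ Finset.range (k.length + 1),
    MvPolynomial.X 0 ^ (k.take i).sum * MvPolynomial.X 1 ^ (k.drop i).sum
      * Polynomial.aeval (MvPolynomial.X 2) (Z (k.take i).reverse)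
      * Polynomial.aeval (MvPolynomial.X 2) (Z (k.drop i))

/-!
Since `Z*` is multiplicative for the harmonic product, `Z*(l) · T = Z*(l * (1))` is the sum of
`Z*` over all ways of inserting a `1` into `l` and of incrementing one entry of `l`.
Differentiating this identity in `T`, and inducting on the number of leading ones, gives
`d/dT Z*(1, l; T) = Z*(l; T)`, while `Z*(l; T)` is constant for admissible `l`. Taylor's formula
at `T = 0` then reads `Z*(l; T) = Σ_p Z*(l_{p+1}, …, l_r; 0) T^p / p!`, summed over the `p` for
which `l` starts with `p` ones. Substituting this into both factors of the summand of
`ζ*_{x,y}(k; T)` split at `c` produces terms indexed by `i ≤ c ≤ j` with `k_{i+1} = ⋯ = k_j = 1`,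
in which the ones between `i` and `j` shift the exponents of `x` and `y`; for fixed `(i, j)` the
sum over `c` is the binomial expansion of `((x + y) T)^{j-i} / (j-i)!`.
-/

open Finset Polynomial

namespace List

variable {α : Type*}

theorem reverse_insertIdx (l : List α) {p : ℕ} (hp : p ≤ l.length) (a : α) :
    (l.insertIdx p a).reverse = l.reverse.insertIdx (l.length - p) a := by
  apply List.ext_getElem
  · simp only [length_reverse, length_insertIdx]
    grind
  · intro n _ _
    simp only [getElem_reverse, getElem_insertIdx]
    grind [length_insertIdx]

theorem reverse_modify (l : List α) {p : ℕ} (hp : p < l.length) (f : α → α) :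
    (l.modify p f).reverse = l.reverse.modify (l.length - 1 - p) f := by
  apply List.ext_getElem
  · simp
  · intro n _ _
    simp only [getElem_reverse, getElem_modify]
    grind

end List

theorem Finset.sum_range_ite_le_eq_sum_range_reflect {M : Type*} [AddCommMonoid M] (f : ℕ → M)
    {c r : ℕ} (hcr : c ≤ r) :
    ∑ i ∈ range (r + 1), (if i ≤ c then f (c - i) else 0) = ∑ p ∈ range (c + 1), f p := by
  rw [← sum_filter, show (range (r + 1)).filter (· ≤ c) = range (c + 1) by
    ext i; simp only [mem_filter, mem_range]; omega, ← sum_range_reflect]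
  exact sum_congr rfl fun i hi => by rw [mem_range] at hi; congr 1; omega

theorem Finset.sum_range_ite_between_eq_sum_range {M : Type*} [AddCommMonoid M] (f : ℕ → M)
    {i j r : ℕ} (hjr : j ≤ r) :
    ∑ c ∈ range (r + 1), (if i ≤ c ∧ c ≤ j then f (c - i) else 0)
      = ∑ m ∈ range (j + 1 - i), f m := by
  rw [← sum_filter, show (range (r + 1)).filter (fun c => i ≤ c ∧ c ≤ j) = Ico i (j + 1) by
    ext c; simp only [mem_filter, mem_range, mem_Ico]; omega, sum_Ico_eq_sum_range]
  simp

theorem List.getD_reverse_take_eq_one_iff {k : List ℕ} {i c : ℕ} (hic : i ≤ c)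
    (hc : c ≤ k.length) :
    (∀ t < c - i, (k.take c).reverse.getD t 0 = 1)
      ↔ ∀ t ∈ Finset.Ico i c, k.getD t 0 = 1 := by
  have hrev : ∀ t < c, (k.take c).reverse.getD t 0 = k.getD (c - 1 - t) 0 := by
    intro t ht
    rw [getD_reverse _ (by simp; omega)]
    simp [List.getD_eq_getElem?_getD, min_eq_left hc, show c - 1 - t < c by omega,
      List.getElem?_eq_getElem (show c - 1 - t < k.length by omega)]
  constructor
  · intro h t ht
    rw [Finset.mem_Ico] at ht
    have := h (c - 1 - t) (by omega)
    rwa [hrev _ (by omega), show c - 1 - (c - 1 - t) = t by omega] at this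
  · intro h t ht
    rw [hrev t (by omega)]
    exact h _ (Finset.mem_Ico.mpr (by omega))

theorem List.getD_drop_eq_one_iff {k : List ℕ} {c j : ℕ} (hcj : c ≤ j) :
    (∀ t < j - c, (k.drop c).getD t 0 = 1) ↔ ∀ t ∈ Finset.Ico c j, k.getD t 0 = 1 := by
  simp only [List.getD_eq_getElem?_getD, List.getElem?_drop, Finset.mem_Ico]
  constructor
  · intro h t ht
    simpa [show c + (t - c) = t by omega] using h (t - c) (by omega)
  · intro h t ht
    exact h _ ⟨by omega, by omega⟩

theorem List.sum_take_eq_add_of_getD_eq_one {k : List ℕ} {i c : ℕ} (hic : i ≤ c)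
    (hc : c ≤ k.length) (h : ∀ t ∈ Finset.Ico i c, k.getD t 0 = 1) :
    (k.take c).sum = (k.take i).sum + (c - i) := by
  induction c, hic using Nat.le_induction with
  | base => simp
  | succ c hic ih =>
    have hk : k[c] = 1 := by
      rw [← List.getD_eq_getElem _ 0]
      exact h c (Finset.mem_Ico.mpr ⟨hic, c.lt_succ_self⟩)
    rw [List.sum_take_succ _ _ (by omega), hk,
      ih (by omega) fun t ht => h t (by simp only [Finset.mem_Ico] at ht ⊢; omega)]
    omega

theorem List.sum_drop_eq_add_of_getD_eq_one {k : List ℕ} {c j : ℕ} (hcj : c ≤ j)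
    (hj : j ≤ k.length) (h : ∀ t ∈ Finset.Ico c j, k.getD t 0 = 1) :
    (k.drop c).sum = (k.drop j).sum + (j - c) := by
  have hsplit_c := congrArg List.sum (List.take_append_drop c k)
  have hsplit_j := congrArg List.sum (List.take_append_drop j k)
  rw [List.sum_append] at hsplit_c hsplit_j
  have := List.sum_take_eq_add_of_getD_eq_one hcj hj h
  omega

theorem inv_factorial_smul_add_pow {K A : Type*} [Field K] [CharZero K] [CommSemiring A]
    [Algebra K A] (x y : A) (n : ℕ) :
    ((n.factorial : K)⁻¹) • (x + y) ^ n = ∑ m ∈ range (n + 1),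
      ((m.factorial : K)⁻¹ * ((n - m).factorial : K)⁻¹) • (x ^ m * y ^ (n - m)) := by
  rw [add_pow, smul_sum]
  refine sum_congr rfl fun m hm => ?_
  have hmn : m ≤ n := Nat.lt_succ_iff.mp (mem_range.mp hm)
  have hchoose : ((n.choose m : ℕ) : K) * m.factorial * (n - m).factorial = n.factorial := by
    exact_mod_cast Nat.choose_mul_factorial_mul_factorial hmn
  rw [mul_comm, ← nsmul_eq_mul, ← Nat.cast_smul_eq_nsmul K, smul_smul]
  congr 1
  have := Nat.cast_ne_zero (R := K) |>.mpr (Nat.choose_pos hmn).ne'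
  have := Nat.cast_ne_zero (R := K) |>.mpr m.factorial_ne_zero
  have := Nat.cast_ne_zero (R := K) |>.mpr (n - m).factorial_ne_zero
  rw [← hchoose]
  field_simp

theorem Polynomial.eval_zero_iterate_derivative {R : Type*} [Semiring R] (f : R[X]) (k : ℕ) :
    (derivative^[k] f).eval 0 = k.factorial • f.coeff k := by
  rw [← coeff_zero_eq_eval_zero, coeff_iterate_derivative, zero_add, Nat.descFactorial_self]

theorem harmAux_nil_right_s5 (m : List ℕ) : harmAux m [] = Finsupp.single m 1 := by
  cases m <;> simp [harmAux]

theorem harmAux_singleton_one (m : List ℕ) :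
    harmAux m [1] = ∑ p ∈ range (m.length + 1), Finsupp.single (m.insertIdx p 1) 1
      + ∑ p ∈ range m.length, Finsupp.single (m.modify p (· + 1)) 1 := by
  induction m with
  | nil => simp [harmAux]
  | cons a as ih =>
    rw [harmAux, ih]
    simp only [harmAux_nil_right_s5, Finsupp.mapDomain_add, Finsupp.mapDomain_finsetSum,
      Finsupp.mapDomain_single, List.length_cons, sum_range_succ' _ (as.length + 1),
      sum_range_succ' _ as.length, List.insertIdx_zero, List.insertIdx_succ_cons,
      List.modify_zero_cons, List.modify_succ_cons]
    abel

theorem harm_singleton_one (l : List ℕ) :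
    harm l [1] = ∑ p ∈ range (l.length + 1), Finsupp.single (l.insertIdx p 1) 1
      + ∑ p ∈ range l.length, Finsupp.single (l.modify p (· + 1)) 1 := by
  rw [harm, List.reverse_singleton, harmAux_singleton_one, Finsupp.mapDomain_add,
    Finsupp.mapDomain_finsetSum, Finsupp.mapDomain_finsetSum, List.length_reverse]
  simp only [Finsupp.mapDomain_single]
  congr 1
  · rw [← sum_range_reflect]
    refine sum_congr rfl fun p hp => ?_
    have hp := mem_range.mp hp
    rw [List.reverse_insertIdx _ (by rw [List.length_reverse]; omega), List.reverse_reverse,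
      List.length_reverse]
    congr 3
    omega
  · rw [← sum_range_reflect]
    refine sum_congr rfl fun p hp => ?_
    have hp := mem_range.mp hp
    rw [List.reverse_modify _ (by rw [List.length_reverse]; omega), List.reverse_reverse,
      List.length_reverse]
    congr 3
    omega

theorem Zext_eq_linearCombination (Z : List ℕ → ℝ[X]) (v : List ℕ →₀ ℚ) :
    Zext Z v = Finsupp.linearCombination ℚ Z v := rfl

def leadingOnes (l : List ℕ) : ℕ := (l.takeWhile (· == 1)).length

@[simp] theorem leadingOnes_nil : leadingOnes [] = 0 := rfl

@[simp] theorem leadingOnes_cons (a : ℕ) (l : List ℕ) :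
    leadingOnes (a :: l) = if a = 1 then leadingOnes l + 1 else 0 := by
  unfold leadingOnes
  split_ifs with h <;> simp [h]

theorem leadingOnes_le_length (l : List ℕ) : leadingOnes l ≤ l.length :=
  (List.takeWhile_sublist _).length_le

theorem insertIdx_one_of_le_leadingOnes :
    ∀ {l : List ℕ} {p : ℕ}, p ≤ leadingOnes l → l.insertIdx p 1 = 1 :: l
  | _, 0, _ => rfl
  | [], _ + 1, h => by simp at h
  | a :: l, p + 1, h => by
    by_cases ha : a = 1
    · subst ha
      simp only [leadingOnes_cons, if_true] at h
      simp [insertIdx_one_of_le_leadingOnes (l := l) (p := p) (by omega)]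
    · simp [ha] at h

theorem leadingOnes_insertIdx_le :
    ∀ {l : List ℕ} {p : ℕ}, leadingOnes l < p →
      leadingOnes (l.insertIdx p 1) ≤ leadingOnes l
  | _, 0, h => by omega
  | [], _ + 1, _ => by simp
  | a :: l, p + 1, h => by
    by_cases ha : a = 1
    · simp only [leadingOnes_cons, ha, if_true, List.insertIdx_succ_cons] at h ⊢
      have := leadingOnes_insertIdx_le (l := l) (p := p) (by omega)
      omega
    · simp [ha]

theorem leadingOnes_modify_le :
    ∀ {l : List ℕ} (p : ℕ), IsIndex l → leadingOnes (l.modify p (· + 1)) ≤ leadingOnes l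
  | [], _, _ => by simp
  | a :: l, 0, hl => by
    have := hl a (by simp)
    simp only [List.modify_zero_cons, leadingOnes_cons]
    split_ifs <;> omega
  | a :: l, p + 1, hl => by
    by_cases ha : a = 1
    · simp only [List.modify_succ_cons, leadingOnes_cons, ha, if_true]
      have := leadingOnes_modify_le (l := l) p fun b hb => hl b (by simp [hb])
      omega
    · simp [ha]

theorem IsIndex.insertIdx_one {l : List ℕ} (hl : IsIndex l) (p : ℕ) :
    IsIndex (l.insertIdx p 1) := fun a ha => by
  rcases List.eq_or_mem_of_mem_insertIdx ha with rfl | ha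
  · rfl
  · exact hl a ha

theorem IsIndex.modify_succ {l : List ℕ} (hl : IsIndex l) (p : ℕ) :
    IsIndex (l.modify p (· + 1)) := by
  intro a ha
  obtain ⟨n, hn, rfl⟩ := List.getElem_of_mem ha
  rw [List.getElem_modify]
  split_ifs
  · omega
  · exact hl _ (List.getElem_mem _)

theorem IsIndex.sublist {l l' : List ℕ} (hl : IsIndex l) (h : l'.Sublist l) : IsIndex l' :=
  fun a ha => hl a (h.subset ha)

theorem IsIndex.reverse {l : List ℕ} (hl : IsIndex l) : IsIndex l.reverse :=
  fun a ha => hl a (List.mem_reverse.mp ha)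

theorem IsIndex.isAdmissible {l : List ℕ} (hl : IsIndex l) (h : l.getD 0 0 ≠ 1) :
    IsAdmissible l := by
  rcases l with _ | ⟨a, l⟩
  · simp [IsAdmissible]
  · have := hl a (by simp)
    simp only [List.getD_cons_zero] at h
    simp only [IsAdmissible, List.head?_cons, Option.mem_def, Option.some.injEq, forall_eq']
    omega

noncomputable def dropLeadingOne (Z : List ℕ → ℝ[X]) (l : List ℕ) : ℝ[X] :=
  if l.getD 0 0 = 1 then Z l.tail else 0

structure IsHarmonicRegularization (Z : List ℕ → ℝ[X]) : Prop where
  eq_mzv : ∀ k, IsIndex k → IsAdmissible k → Z k = C (mzv k)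
  singleton_one : Z [1] = X
  harm_mul : ∀ k l, IsIndex k → IsIndex l → Zext Z (harm k l) = Z k * Z l

namespace IsHarmonicRegularization

variable {Z : List ℕ → ℝ[X]}

theorem mul_X (hZ : IsHarmonicRegularization Z) {l : List ℕ} (hl : IsIndex l) :
    Z l * X = ∑ p ∈ range (l.length + 1), Z (l.insertIdx p 1)
      + ∑ p ∈ range l.length, Z (l.modify p (· + 1)) := by
  rw [← hZ.singleton_one, ← hZ.harm_mul l [1] hl (by simp [IsIndex]), harm_singleton_one,
    Zext_eq_linearCombination]
  simp

theorem sum_dropLeadingOne_insertIdx_add_modify (hZ : IsHarmonicRegularization Z)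
    {l : List ℕ} (hl : IsIndex l) :
    ∑ p ∈ range (l.length + 1), dropLeadingOne Z (l.insertIdx p 1)
      + ∑ p ∈ range l.length, dropLeadingOne Z (l.modify p (· + 1))
      = Z l + dropLeadingOne Z l * X := by
  rcases l with _ | ⟨a, l⟩
  · simp [dropLeadingOne]
  have ha : 1 ≤ a := hl a (by simp)
  rw [List.length_cons, sum_range_succ' (fun p => dropLeadingOne Z ((a :: l).insertIdx p 1)),
    sum_range_succ' (fun p => dropLeadingOne Z ((a :: l).modify p (· + 1)))]
  simp only [List.insertIdx_zero, List.insertIdx_succ_cons, List.modify_zero_cons,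
    List.modify_succ_cons, dropLeadingOne, List.getD_cons_zero, List.tail_cons,
    if_neg (show a + 1 ≠ 1 by omega), add_zero]
  by_cases ha1 : a = 1
  · subst ha1
    simp only [if_true]
    rw [hZ.mul_X (l := l) fun b hb => hl b (by simp [hb]), sum_range_succ']
    simp only [List.insertIdx_zero]
    ring
  · simp [ha1]

-- Differentiate `Z l * X = ∑ Z (insert a 1) + ∑ Z (increment an entry)`: inserting the `1`
-- inside the leading run of ones always gives `1 :: l`, and every other term has at most
-- `leadingOnes l` leading ones, so the induction hypothesis applies to it.
theorem derivative_cons_one (hZ : IsHarmonicRegularization Z) {l : List ℕ} (hl : IsIndex l)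
    (ih : ∀ m, IsIndex m → leadingOnes m ≤ leadingOnes l →
      derivative (Z m) = dropLeadingOne Z m) :
    derivative (Z (1 :: l)) = Z l := by
  set n := leadingOnes l
  set E := derivative (Z (1 :: l)) - Z l
  have hins : ∀ p ∈ range (l.length + 1), derivative (Z (l.insertIdx p 1))
      = dropLeadingOne Z (l.insertIdx p 1) + if p ≤ n then E else 0 := by
    intro p _
    split_ifs with hp
    · simp [insertIdx_one_of_le_leadingOnes hp, dropLeadingOne, E]
    · rw [ih _ (hl.insertIdx_one p) (leadingOnes_insertIdx_le (by omega)), add_zero]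
  have hmod : ∀ p ∈ range l.length, derivative (Z (l.modify p (· + 1)))
      = dropLeadingOne Z (l.modify p (· + 1)) :=
    fun p _ => ih _ (hl.modify_succ p) (leadingOnes_modify_le p hl)
  have hcount : ∑ p ∈ range (l.length + 1), (if p ≤ n then E else 0) = (n + 1) • E := by
    rw [← sum_filter, show (range (l.length + 1)).filter (· ≤ n) = range (n + 1) by
      ext p; simp only [mem_filter, mem_range]; have := leadingOnes_le_length l; omega,
      sum_const, card_range]
  have hderiv := congrArg derivative (hZ.mul_X hl)
  rw [derivative_mul, derivative_X, mul_one, ih l hl le_rfl, map_add, map_sum, map_sum,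
    sum_congr rfl hins, sum_congr rfl hmod, sum_add_distrib, hcount] at hderiv
  have hE : ((n + 1 : ℕ) : ℝ[X]) * E = 0 := by
    rw [nsmul_eq_mul] at hderiv
    linear_combination -hderiv - hZ.sum_dropLeadingOne_insertIdx_add_modify hl
  rw [← sub_eq_zero]
  exact (mul_eq_zero.mp hE).resolve_left (Nat.cast_ne_zero.mpr n.succ_ne_zero)

theorem derivative_eq (hZ : IsHarmonicRegularization Z) {l : List ℕ} (hl : IsIndex l) :
    derivative (Z l) = dropLeadingOne Z l := by
  induction h : leadingOnes l using Nat.strong_induction_on generalizing l with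
  | _ n ih =>
    by_cases hhead : l.getD 0 0 = 1
    · obtain ⟨l, rfl⟩ : ∃ l', l = 1 :: l' := by
        rcases l with _ | ⟨a, l⟩
        · simp at hhead
        · exact ⟨l, by simpa using hhead⟩
      rw [derivative_cons_one hZ (fun a ha => hl a (by simp [ha])) fun m hm hlead =>
        ih _ (by simp at h; omega) hm rfl]
      simp [dropLeadingOne]
    · rw [hZ.eq_mzv l hl (hl.isAdmissible hhead), derivative_C, dropLeadingOne, if_neg hhead]

theorem iterate_derivative_eq (hZ : IsHarmonicRegularization Z) {l : List ℕ} (hl : IsIndex l)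
    (p : ℕ) : derivative^[p] (Z l) = if ∀ t < p, l.getD t 0 = 1 then Z (l.drop p) else 0 := by
  induction p with
  | zero => simp
  | succ p ih =>
    rw [Function.iterate_succ_apply', ih]
    simp only [Nat.forall_lt_succ_right]
    by_cases h : ∀ t < p, l.getD t 0 = 1
    · have hp : (l.drop p).getD 0 0 = l.getD p 0 := by simp [List.getD_eq_getElem?_getD]
      rw [if_pos h, hZ.derivative_eq (hl.sublist (List.drop_sublist p l)), dropLeadingOne,
        List.tail_drop, hp]
      exact if_congr (and_iff_right h).symm rfl rfl
    · rw [if_neg h, derivative_zero, if_neg fun h' => h h'.1]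

theorem coeff_eq (hZ : IsHarmonicRegularization Z) {l : List ℕ} (hl : IsIndex l) (p : ℕ) :
    (Z l).coeff p
      = if ∀ t < p, l.getD t 0 = 1 then (Z (l.drop p)).eval 0 / p.factorial else 0 := by
  have h := eval_zero_iterate_derivative (Z l) p
  rw [hZ.iterate_derivative_eq hl, nsmul_eq_mul] at h
  have hfac : (p.factorial : ℝ) ≠ 0 := by positivity
  split_ifs at h ⊢
  · rw [h]
    field_simp
  · exact ((mul_eq_zero.mp (h.symm.trans eval_zero)).resolve_left hfac)

theorem aeval_eq_sum (hZ : IsHarmonicRegularization Z) {l : List ℕ} (hl : IsIndex l)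
    {A : Type*} [CommSemiring A] [Algebra ℝ A] (x : A) :
    aeval x (Z l) = ∑ p ∈ range (l.length + 1),
      (if ∀ t < p, l.getD t 0 = 1 then (Z (l.drop p)).eval 0 / p.factorial else 0) • x ^ p := by
  have hdeg : (Z l).natDegree < l.length + 1 := by
    refine Nat.lt_succ_of_le (natDegree_le_iff_coeff_eq_zero.mpr fun N hN => ?_)
    rw [hZ.coeff_eq hl, if_neg fun h => ?_]
    simpa [List.getD_eq_default _ _ le_rfl] using h l.length hN
  simp only [aeval_eq_sum_range' hdeg, hZ.coeff_eq hl]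

theorem aeval_reverse_take (hZ : IsHarmonicRegularization Z) {k : List ℕ} (hk : IsIndex k)
    {c : ℕ} (hc : c ≤ k.length) {A : Type*} [CommSemiring A] [Algebra ℝ A] (x : A) :
    aeval x (Z (k.take c).reverse) = ∑ i ∈ range (k.length + 1),
      if i ≤ c ∧ ∀ t ∈ Finset.Ico i c, k.getD t 0 = 1 then
        ((Z (k.take i).reverse).eval 0 / (c - i).factorial) • x ^ (c - i)
      else 0 := by
  have hlen : (k.take c).reverse.length = c := by simp [hc]
  rw [hZ.aeval_eq_sum (hk.sublist (List.take_sublist c k)).reverse x, hlen,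
    ← sum_range_ite_le_eq_sum_range_reflect _ hc]
  refine sum_congr rfl fun i _ => ?_
  by_cases hic : i ≤ c
  · have hdrop : (k.take c).reverse.drop (c - i) = (k.take i).reverse := by
      rw [List.drop_reverse, List.take_take, List.length_take, min_eq_left hc,
        min_eq_left (by omega), Nat.sub_sub_self hic]
    simp only [List.getD_reverse_take_eq_one_iff hic hc, hdrop, hic,
      true_and, if_true]
    split_ifs <;> simp
  · simp [hic]

theorem aeval_drop (hZ : IsHarmonicRegularization Z) {k : List ℕ} (hk : IsIndex k)
    {c : ℕ} (hc : c ≤ k.length) {A : Type*} [CommSemiring A] [Algebra ℝ A] (x : A) :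
    aeval x (Z (k.drop c)) = ∑ j ∈ range (k.length + 1),
      if c ≤ j ∧ ∀ t ∈ Finset.Ico c j, k.getD t 0 = 1 then
        ((Z (k.drop j)).eval 0 / (j - c).factorial) • x ^ (j - c)
      else 0 := by
  rw [hZ.aeval_eq_sum (hk.sublist (List.drop_sublist c k)) x, List.length_drop,
    show k.length - c + 1 = k.length + 1 - c by omega,
    ← sum_range_ite_between_eq_sum_range _ (le_refl k.length)]
  refine sum_congr rfl fun j hj => ?_
  have hj : j ≤ k.length := Nat.lt_succ_iff.mp (mem_range.mp hj)
  by_cases hcj : c ≤ j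
  · simp only [List.getD_drop_eq_one_iff hcj, List.drop_drop, Nat.add_sub_cancel' hcj, hcj, hj,
      and_self, true_and, if_true]
    split_ifs <;> simp
  · simp [hcj]

end IsHarmonicRegularization

-- The part of the summand of `zetaXYpoly` split at `c` in which the Taylor expansions of its two
-- factors reach down to positions `i ≤ c` and `j ≥ c` of `k`.
noncomputable def expansionTerm (Z : List ℕ → ℝ[X]) (k : List ℕ) (i c j : ℕ) :
    MvPolynomial (Fin 3) ℝ :=
  if i ≤ c ∧ c ≤ j ∧ ∀ t ∈ Finset.Ico i j, k.getD t 0 = 1 then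
    MvPolynomial.X 0 ^ (k.take i).sum * MvPolynomial.X 1 ^ (k.drop j).sum
      * MvPolynomial.C ((Z (k.take i).reverse).eval 0) * MvPolynomial.C ((Z (k.drop j)).eval 0)
      * MvPolynomial.X 2 ^ (j - i)
      * (((c - i).factorial : ℝ)⁻¹ * ((j - c).factorial : ℝ)⁻¹)
        • (MvPolynomial.X 0 ^ (c - i) * MvPolynomial.X 1 ^ (j - c))
  else 0

theorem expansionTerm_eq_mul (Z : List ℕ → ℝ[X]) {k : List ℕ} {i c j : ℕ}
    (hj : j ≤ k.length) :
    MvPolynomial.X 0 ^ (k.take c).sum * MvPolynomial.X 1 ^ (k.drop c).sum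
      * ((if i ≤ c ∧ ∀ t ∈ Finset.Ico i c, k.getD t 0 = 1 then
          ((Z (k.take i).reverse).eval 0 / (c - i).factorial) • MvPolynomial.X 2 ^ (c - i)
          else 0)
        * (if c ≤ j ∧ ∀ t ∈ Finset.Ico c j, k.getD t 0 = 1 then
          ((Z (k.drop j)).eval 0 / (j - c).factorial) • MvPolynomial.X 2 ^ (j - c)
          else 0))
      = expansionTerm Z k i c j := by
  by_cases h : i ≤ c ∧ c ≤ j ∧ ∀ t ∈ Finset.Ico i j, k.getD t 0 = 1
  · obtain ⟨hic, hcj, hones⟩ := h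
    have hleft : ∀ t ∈ Finset.Ico i c, k.getD t 0 = 1 := fun t ht =>
      hones t (by simp only [Finset.mem_Ico] at ht ⊢; omega)
    have hright : ∀ t ∈ Finset.Ico c j, k.getD t 0 = 1 := fun t ht =>
      hones t (by simp only [Finset.mem_Ico] at ht ⊢; omega)
    rw [expansionTerm, if_pos (And.intro hic (And.intro hcj hones)),
      if_pos (And.intro hic hleft), if_pos (And.intro hcj hright),
      List.sum_take_eq_add_of_getD_eq_one hic (by omega) hleft,
      List.sum_drop_eq_add_of_getD_eq_one hcj hj hright,
      show j - i = (c - i) + (j - c) by omega]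
    simp only [MvPolynomial.smul_eq_C_mul, pow_add, div_eq_mul_inv, map_mul]
    ring
  · rw [expansionTerm, if_neg h]
    split_ifs with hL hR
    · exact absurd ⟨hL.1, hR.1, fun t ht => if htc : t < c then hL.2 t (by
        simp only [Finset.mem_Ico] at ht ⊢; omega) else hR.2 t (by
        simp only [Finset.mem_Ico] at ht ⊢; omega)⟩ h
    all_goals simp

theorem sum_expansionTerm (Z : List ℕ → ℝ[X]) {k : List ℕ} {i j : ℕ}
    (hj : j ≤ k.length) :
    ∑ c ∈ range (k.length + 1), expansionTerm Z k i c j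
      = if i ≤ j ∧ ∀ t ∈ Finset.Ico i j, k.getD t 0 = 1 then
          MvPolynomial.X 0 ^ (k.take i).sum * MvPolynomial.X 1 ^ (k.drop j).sum
            * ((j - i).factorial : ℝ)⁻¹ •
                ((MvPolynomial.X 0 + MvPolynomial.X 1) * MvPolynomial.X 2) ^ (j - i)
            * MvPolynomial.C ((Z (k.take i).reverse).eval 0)
            * MvPolynomial.C ((Z (k.drop j)).eval 0)
        else 0 := by
  by_cases h : i ≤ j ∧ ∀ t ∈ Finset.Ico i j, k.getD t 0 = 1
  · set W : MvPolynomial (Fin 3) ℝ :=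
      MvPolynomial.X 0 ^ (k.take i).sum * MvPolynomial.X 1 ^ (k.drop j).sum
      * MvPolynomial.C ((Z (k.take i).reverse).eval 0) * MvPolynomial.C ((Z (k.drop j)).eval 0)
      * MvPolynomial.X 2 ^ (j - i)
    set f : ℕ → MvPolynomial (Fin 3) ℝ := fun m =>
      W * (((m.factorial : ℝ)⁻¹ * ((j - i - m).factorial : ℝ)⁻¹)
        • (MvPolynomial.X 0 ^ m * MvPolynomial.X 1 ^ (j - i - m)))
    have hterm : ∀ c, expansionTerm Z k i c j = if i ≤ c ∧ c ≤ j then f (c - i) else 0 := by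
      intro c
      rw [expansionTerm]
      split_ifs with h1 h2 h2
      · simp only [f, W, show j - i - (c - i) = j - c by omega]
      · exact absurd ⟨h1.1, h1.2.1⟩ h2
      · exact absurd ⟨h2.1, h2.2, h.2⟩ h1
      · rfl
    rw [sum_congr rfl fun c _ => hterm c, sum_range_ite_between_eq_sum_range _ hj,
      show j + 1 - i = j - i + 1 by omega, ← mul_sum, ← inv_factorial_smul_add_pow, if_pos h]
    simp only [W, MvPolynomial.smul_eq_C_mul, mul_pow]
    ring
  · rw [if_neg h]
    refine sum_eq_zero fun c _ => ?_
    rw [expansionTerm, if_neg fun h' => h ⟨h'.1.trans h'.2.1, h'.2.2⟩]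

theorem IsHarmonicRegularization.zetaXY_summand_eq {Z : List ℕ → ℝ[X]}
    (hZ : IsHarmonicRegularization Z) {k : List ℕ} (hk : IsIndex k) {c : ℕ}
    (hc : c ≤ k.length) :
    MvPolynomial.X 0 ^ (k.take c).sum * MvPolynomial.X 1 ^ (k.drop c).sum
      * aeval (MvPolynomial.X 2) (Z (k.take c).reverse) * aeval (MvPolynomial.X 2) (Z (k.drop c))
      = ∑ i ∈ range (k.length + 1), ∑ j ∈ range (k.length + 1),
          expansionTerm Z k i c j := by
  rw [hZ.aeval_reverse_take hk hc, hZ.aeval_drop hk hc, mul_assoc, sum_mul_sum, mul_sum]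
  refine sum_congr rfl fun i _ => ?_
  rw [mul_sum]
  exact sum_congr rfl fun j hj => expansionTerm_eq_mul Z (Nat.lt_succ_iff.mp (mem_range.mp hj))

/-- **Proposition 2.5, first identity (coefficientwise form).**
ζ*_{x,y}(k;T) = Σ_{0 ≤ i ≤ j ≤ r, k_{i+1} = ⋯ = k_j = 1}
x^{k₁+⋯+kᵢ} y^{k_{j+1}+⋯+k_r} ((x+y)T)^{j-i}/(j-i)! · Z*(kᵢ,…,k₁;0)·Z*(k_{j+1},…,k_r;0). -/
theorem zetaXY_harm_expansion
    (Zs : List ℕ → Polynomial ℝ)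
    (hZs_adm : ∀ k, IsIndex k → IsAdmissible k → Zs k = Polynomial.C (mzv k))
    (hZs_one : Zs [1] = Polynomial.X)
    (hZs_mul : ∀ k l, IsIndex k → IsIndex l → Zext Zs (harm k l) = Zs k * Zs l)
    (k : List ℕ) (hk : IsIndex k) :
    zetaXYpoly Zs k
      = ∑ i ∈ Finset.range (k.length + 1), ∑ j ∈ Finset.range (k.length + 1),
          if i ≤ j ∧ ∀ t ∈ Finset.Ico i j, k.getD t 0 = 1 then
            MvPolynomial.X 0 ^ (k.take i).sum * MvPolynomial.X 1 ^ (k.drop j).sum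
              * ((j - i).factorial : ℝ)⁻¹ •
                  ((MvPolynomial.X 0 + MvPolynomial.X 1) * MvPolynomial.X 2) ^ (j - i)
              * MvPolynomial.C ((Zs (k.take i).reverse).eval 0)
              * MvPolynomial.C ((Zs (k.drop j)).eval 0)
          else 0 := by
  have hZ : IsHarmonicRegularization Zs := ⟨hZs_adm, hZs_one, hZs_mul⟩
  calc zetaXYpoly Zs k
      = ∑ c ∈ range (k.length + 1), ∑ i ∈ range (k.length + 1),
          ∑ j ∈ range (k.length + 1), expansionTerm Zs k i c j :=
        sum_congr rfl fun c hc => hZ.zetaXY_summand_eq hk (Nat.lt_succ_iff.mp (mem_range.mp hc))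
    _ = ∑ i ∈ range (k.length + 1), ∑ j ∈ range (k.length + 1),
          ∑ c ∈ range (k.length + 1), expansionTerm Zs k i c j := by
        rw [sum_comm]
        exact sum_congr rfl fun i _ => sum_comm
    _ = _ := sum_congr rfl fun i _ => sum_congr rfl fun j hj =>
        sum_expansionTerm Zs (Nat.lt_succ_iff.mp (mem_range.mp hj))
end
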